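/- arXiv:1710.08165 — 3 statements merged into one kernel-verified Lean document; each statement's English description precedes it below -/
import Mathlib

section
/- (Lemma 5, parts d–f; John weight properties) Let x be in the interior of the polytope K and let w ∈ ℝ^m be a positive vector satisfying the John fixed-point equations w_i = (P_{x,w})_{ii} + β_J for all i ∈ [m]. Then: (d) w_i ∈ [β_J, 1+β_J] for all i ∈ [m]; (e) Σ_{i=1}^m w_i = 3d/2; and (f) the John slack sensitivities satisfy θ_{J_x,i} = a_i^⊤ J_x^{-1} a_i / s_{x,i}² ∈ [0,4] for all i ∈ [m], where J_x = Σ_{i=1}^m w_i a_i a_i^⊤ / s_{x,i}². -/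
open Matrix MeasureTheory Real Set
open scoped ENNReal

noncomputable section

namespace PolytopeWalks

/-- Slackness `s_{x,i} = b_i − a_i^⊤ x`. -/
def slack {d m : ℕ} (A : Matrix (Fin m) (Fin d) ℝ) (b : Fin m → ℝ) (x : Fin d → ℝ)
    (i : Fin m) : ℝ :=
  b i - A.mulVec x i

/-- The polytope `K = {x : A x ≤ b}`. -/
def poly {d m : ℕ} (A : Matrix (Fin m) (Fin d) ℝ) (b : Fin m → ℝ) : Set (Fin d → ℝ) :=
  {x | ∀ i, A.mulVec x i ≤ b i}

/-- The interior of the polytope: all slacks positive. -/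
def interiorPoly {d m : ℕ} (A : Matrix (Fin m) (Fin d) ℝ) (b : Fin m → ℝ) :
    Set (Fin d → ℝ) :=
  {x | ∀ i, 0 < slack A b x i}

/-- Hessian of the logarithmic barrier, `∇²F_x = Σ_i a_i a_i^⊤ / s_{x,i}²`. -/
def logHess {d m : ℕ} (A : Matrix (Fin m) (Fin d) ℝ) (b : Fin m → ℝ) (x : Fin d → ℝ) :
    Matrix (Fin d) (Fin d) ℝ :=
  ∑ i : Fin m, ((slack A b x i) ^ 2)⁻¹ • vecMulVec (A i) (A i)

/-- Leverage scores `σ_{x,i} = a_i^⊤ (∇²F_x)⁻¹ a_i / s_{x,i}²`. -/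
def lev {d m : ℕ} (A : Matrix (Fin m) (Fin d) ℝ) (b : Fin m → ℝ) (x : Fin d → ℝ)
    (i : Fin m) : ℝ :=
  (A i) ⬝ᵥ ((logHess A b x)⁻¹ *ᵥ (A i)) / (slack A b x i) ^ 2

/-- The Vaidya matrix `V_x = Σ_i (σ_{x,i} + d/m) a_i a_i^⊤ / s_{x,i}²`. -/
def vaidyaMat {d m : ℕ} (A : Matrix (Fin m) (Fin d) ℝ) (b : Fin m → ℝ) (x : Fin d → ℝ) :
    Matrix (Fin d) (Fin d) ℝ :=
  ∑ i : Fin m, ((lev A b x i + (d : ℝ) / m) / (slack A b x i) ^ 2) • vecMulVec (A i) (A i)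

/-- Vaidya local norm `‖v‖_{V_x} = (v^⊤ V_x v)^{1/2}`. -/
def vNorm {d m : ℕ} (A : Matrix (Fin m) (Fin d) ℝ) (b : Fin m → ℝ) (x v : Fin d → ℝ) : ℝ :=
  Real.sqrt (v ⬝ᵥ (vaidyaMat A b x *ᵥ v))

/-- Vaidya slack sensitivities `θ_{x,i} = a_i^⊤ V_x⁻¹ a_i / s_{x,i}²`. -/
def thetaV {d m : ℕ} (A : Matrix (Fin m) (Fin d) ℝ) (b : Fin m → ℝ) (x : Fin d → ℝ)
    (i : Fin m) : ℝ :=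
  (A i) ⬝ᵥ ((vaidyaMat A b x)⁻¹ *ᵥ (A i)) / (slack A b x i) ^ 2

/-- Rescaled constraint matrix `A_x = S_x⁻¹ A`. -/
def Amat {d m : ℕ} (A : Matrix (Fin m) (Fin d) ℝ) (b : Fin m → ℝ) (x : Fin d → ℝ) :
    Matrix (Fin m) (Fin d) ℝ :=
  Matrix.of fun i j => A i j / slack A b x i

/-- The projection matrix `P_x = A_x (A_x^⊤ A_x)⁻¹ A_x^⊤` onto the column space of `A_x`. -/
def projMat {d m : ℕ} (A : Matrix (Fin m) (Fin d) ℝ) (b : Fin m → ℝ) (x : Fin d → ℝ) :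
    Matrix (Fin m) (Fin m) ℝ :=
  Amat A b x * (logHess A b x)⁻¹ * (Amat A b x)ᵀ

/-- Entrywise (Hadamard) square of a matrix. -/
def hadSq {n : ℕ} (M : Matrix (Fin n) (Fin n) ℝ) : Matrix (Fin n) (Fin n) ℝ :=
  Matrix.of fun i j => (M i j) ^ 2

/-- `κ = log₂(2m/d)`. -/
def kappaJ (d m : ℕ) : ℝ := Real.logb 2 ((2 * m : ℝ) / d)

/-- `α = 1 − 1/log₂(2m/d)`. -/
def alphaJ (d m : ℕ) : ℝ := 1 - 1 / Real.logb 2 ((2 * m : ℝ) / d)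

/-- `β_J = d/(2m)`. -/
def betaJ (d m : ℕ) : ℝ := (d : ℝ) / (2 * m)

/-- The weighted projection matrix
`P_{x,w} = W^{α/2} A_x (A_x^⊤ W^α A_x)⁻¹ A_x^⊤ W^{α/2}`. -/
def johnProj {d m : ℕ} (A : Matrix (Fin m) (Fin d) ℝ) (b : Fin m → ℝ) (x : Fin d → ℝ)
    (w : Fin m → ℝ) : Matrix (Fin m) (Fin m) ℝ :=
  Matrix.diagonal (fun i => w i ^ (alphaJ d m / 2)) * Amat A b x *
    ((Amat A b x)ᵀ * Matrix.diagonal (fun i => w i ^ alphaJ d m) * Amat A b x)⁻¹ *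
    (Amat A b x)ᵀ * Matrix.diagonal (fun i => w i ^ (alphaJ d m / 2))

/-- `w` is a positive solution of the John fixed-point equations
`w_i = (P_{x,w})_{ii} + β_J` at `x`. -/
def IsJohnWeight {d m : ℕ} (A : Matrix (Fin m) (Fin d) ℝ) (b : Fin m → ℝ) (x : Fin d → ℝ)
    (w : Fin m → ℝ) : Prop :=
  (∀ i, 0 < w i) ∧ ∀ i, w i = johnProj A b x w i i + betaJ d m

/-- The John matrix `J_x = Σ_i w_i a_i a_i^⊤ / s_{x,i}²` built from weights `w`. -/
def johnMat {d m : ℕ} (A : Matrix (Fin m) (Fin d) ℝ) (b : Fin m → ℝ) (x : Fin d → ℝ)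
    (w : Fin m → ℝ) : Matrix (Fin d) (Fin d) ℝ :=
  ∑ i : Fin m, (w i / (slack A b x i) ^ 2) • vecMulVec (A i) (A i)

end PolytopeWalks

/-!
The fixed-point equations say that `w_i - β_J` is the `i`-th diagonal entry of `P_{x,w}`, the
orthogonal projection onto the column space of `W^{α/2} A_x`. The diagonal of an orthogonal
projection lies in `[0, 1]` and its trace is its rank `d`; this gives (d) and (e).
For (f), `α` is chosen so that `β_J ^ (1 - α) = 1/2`, hence `w_i ^ (1 - α) ∈ [1/2, 2]`. So
`W^α ≤ 2 W`, which inverts to `J_x⁻¹ ≤ 2 (A_xᵀ W^α A_x)⁻¹` in the Loewner order, and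
`θ_i ≤ 2 (P_{x,w})_{ii} / w_i^α ≤ 2 w_i ^ (1 - α) ≤ 4`.
-/

namespace Matrix

variable {m n : Type*}

theorem mulVec_injective_of_rank_eq_card [Fintype n] {A : Matrix m n ℝ}
    (hA : A.rank = Fintype.card n) : Function.Injective A.mulVec := by
  have hker : Module.finrank ℝ (LinearMap.ker A.mulVecLin) = 0 := by
    have := LinearMap.finrank_range_add_finrank_ker A.mulVecLin
    rw [← rank, hA, Module.finrank_fintype_fun_eq_card] at this
    omega
  exact LinearMap.ker_eq_bot.mp (Submodule.finrank_eq_zero.mp hker)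

theorem transpose_diagonal_mul_mul_self [Fintype m] [DecidableEq m] (g : m → ℝ)
    (B : Matrix m n ℝ) :
    (diagonal g * B)ᵀ * (diagonal g * B) = Bᵀ * diagonal (fun i => g i ^ 2) * B := by
  simp only [transpose_mul, diagonal_transpose, Matrix.mul_assoc,
    ← Matrix.mul_assoc (diagonal g), diagonal_mul_diagonal, sq]

variable [Fintype m] [Fintype n]

theorem dotProduct_transpose_diagonal_mul_mulVec [DecidableEq m] (B : Matrix m n ℝ)
    (c : m → ℝ) (u : n → ℝ) :
    u ⬝ᵥ (Bᵀ * diagonal c * B) *ᵥ u = ∑ i, c i * (B *ᵥ u) i ^ 2 := by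
  rw [← mulVec_mulVec, ← mulVec_mulVec, mulVec_transpose, dotProduct_comm,
    ← dotProduct_mulVec]
  simp only [dotProduct, mulVec_diagonal, sq]
  exact Finset.sum_congr rfl fun i _ => by ring

theorem posDef_transpose_diagonal_mul [DecidableEq m] {B : Matrix m n ℝ}
    (hB : Function.Injective B.mulVec) {c : m → ℝ} (hc : ∀ i, 0 < c i) :
    (Bᵀ * diagonal c * B).PosDef := by
  simpa [conjTranspose_eq_transpose_of_trivial] using
    (PosDef.diagonal hc).conjTranspose_mul_mul_same hB

theorem PosDef.dotProduct_inv_mulVec_le [DecidableEq n] {B C : Matrix n n ℝ} (hB : B.PosDef)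
    (hC : C.PosDef) (hCB : ∀ u, u ⬝ᵥ C *ᵥ u ≤ u ⬝ᵥ B *ᵥ u) (v : n → ℝ) :
    v ⬝ᵥ B⁻¹ *ᵥ v ≤ v ⬝ᵥ C⁻¹ *ᵥ v := by
  set u := B⁻¹ *ᵥ v
  set p := C⁻¹ *ᵥ v
  have hBu : B *ᵥ u = v := by simp [u, mulVec_mulVec, mul_nonsing_inv _ hB.det_pos.ne'.isUnit]
  have hCp : C *ᵥ p = v := by simp [p, mulVec_mulVec, mul_nonsing_inv _ hC.det_pos.ne'.isUnit]
  have hCt : Cᵀ = C := by simpa [conjTranspose_eq_transpose_of_trivial] using hC.isHermitian.eq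
  -- expand `0 ≤ (u - p)ᵀ C (u - p)` and use `uᵀ C u ≤ uᵀ B u = uᵀ v`
  have hnonneg := hC.posSemidef.dotProduct_mulVec_nonneg (u - p)
  have hpCu : p ⬝ᵥ C *ᵥ u = v ⬝ᵥ u := by
    rw [dotProduct_mulVec, ← hCt, vecMul_transpose, hCp]
  simp only [star_trivial, mulVec_sub, dotProduct_sub, sub_dotProduct, hCp, hpCu] at hnonneg
  have hCBu := hBu ▸ hCB u
  linarith [dotProduct_comm u v, dotProduct_comm p v]

theorem dotProduct_inv_transpose_diagonal_mul_mulVec_le_mul [DecidableEq m] [DecidableEq n]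
    {B : Matrix m n ℝ} (hB : Function.Injective B.mulVec) {c c' : m → ℝ} (hc : ∀ i, 0 < c i)
    {t : ℝ} (ht : 0 < t) (hcc' : ∀ i, c i ≤ t * c' i) (v : n → ℝ) :
    v ⬝ᵥ (Bᵀ * diagonal c' * B)⁻¹ *ᵥ v ≤
      t * (v ⬝ᵥ (Bᵀ * diagonal c * B)⁻¹ *ᵥ v) := by
  have hc' : ∀ i, 0 < c' i := fun i => pos_of_mul_pos_right ((hc i).trans_le (hcc' i)) ht.le
  have hscale : Bᵀ * diagonal (fun i => t * c' i) * B = t • (Bᵀ * diagonal c' * B) := by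
    rw [show (fun i => t * c' i) = t • c' from rfl, diagonal_smul, Matrix.mul_smul,
      Matrix.smul_mul]
  have hle := (posDef_transpose_diagonal_mul hB fun i => mul_pos ht (hc' i)
    ).dotProduct_inv_mulVec_le (posDef_transpose_diagonal_mul hB hc) (fun u => by
      simp only [dotProduct_transpose_diagonal_mul_mulVec]
      gcongr with i
      exact hcc' i) v
  have hinv : (t • (Bᵀ * diagonal c' * B))⁻¹ = t⁻¹ • (Bᵀ * diagonal c' * B)⁻¹ :=
    inv_eq_left_inv (by rw [smul_mul_smul_comm, inv_mul_cancel₀ ht.ne', one_smul,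
      nonsing_inv_mul _ (posDef_transpose_diagonal_mul hB hc').det_pos.ne'.isUnit])
  rw [hscale, hinv, smul_mulVec, dotProduct_smul, smul_eq_mul] at hle
  rwa [inv_mul_le_iff₀ ht] at hle

theorem isUnit_det_transpose_mul_self [DecidableEq n] {C : Matrix m n ℝ}
    (hC : Function.Injective C.mulVec) : IsUnit (Cᵀ * C).det := by
  simpa [conjTranspose_eq_transpose_of_trivial] using
    (PosDef.conjTranspose_mul_self C hC).det_pos.ne'.isUnit

theorem mulVec_injective_diagonal_mul [DecidableEq m] {g : m → ℝ} (hg : ∀ i, g i ≠ 0)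
    {B : Matrix m n ℝ} (hB : Function.Injective B.mulVec) :
    Function.Injective (diagonal g * B).mulVec := by
  have hD : Function.Injective (diagonal g).mulVec :=
    mulVec_injective_of_isUnit (isUnit_diagonal.mpr (Pi.isUnit_iff.mpr fun i => (hg i).isUnit))
  exact fun u v huv => hB (hD (by simpa only [mulVec_mulVec] using huv))

/-- The orthogonal projection onto the column space of `C`, when `C` has full column rank. -/
def hatMatrix [DecidableEq n] (C : Matrix m n ℝ) : Matrix m m ℝ := C * (Cᵀ * C)⁻¹ * Cᵀ

theorem hatMatrix_apply_self [DecidableEq n] (C : Matrix m n ℝ) (i : m) :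
    hatMatrix C i i = C i ⬝ᵥ (Cᵀ * C)⁻¹ *ᵥ C i := by
  simp only [hatMatrix, mul_apply, transpose_apply, dotProduct, mulVec, Finset.sum_mul]
  rw [Finset.sum_comm]
  refine Finset.sum_congr rfl fun j _ => ?_
  rw [Finset.mul_sum]
  exact Finset.sum_congr rfl fun k _ => by ring

theorem hatMatrix_diagonal_mul_apply_self [DecidableEq m] [DecidableEq n] (g : m → ℝ)
    (B : Matrix m n ℝ) (i : m) :
    hatMatrix (diagonal g * B) i i =
      g i ^ 2 * (B i ⬝ᵥ (Bᵀ * diagonal (fun i => g i ^ 2) * B)⁻¹ *ᵥ B i) := by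
  have hrow : (diagonal g * B) i = g i • B i := by ext j; simp [diagonal_mul]
  rw [hatMatrix_apply_self, transpose_diagonal_mul_mul_self, hrow, mulVec_smul, dotProduct_smul,
    smul_dotProduct, smul_eq_mul, smul_eq_mul, sq, mul_assoc]

theorem isSymm_hatMatrix [DecidableEq n] (C : Matrix m n ℝ) : (hatMatrix C).IsSymm := by
  simp [IsSymm, hatMatrix, transpose_mul, transpose_nonsing_inv, Matrix.mul_assoc]

theorem isIdempotentElem_hatMatrix [DecidableEq n] {C : Matrix m n ℝ}
    (hC : Function.Injective C.mulVec) : IsIdempotentElem (hatMatrix C) := by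
  have : C * (Cᵀ * C)⁻¹ * (Cᵀ * C) = C := by
    rw [Matrix.mul_assoc, nonsing_inv_mul _ (isUnit_det_transpose_mul_self hC), Matrix.mul_one]
  simp only [IsIdempotentElem, hatMatrix]
  calc C * (Cᵀ * C)⁻¹ * Cᵀ * (C * (Cᵀ * C)⁻¹ * Cᵀ)
      = C * (Cᵀ * C)⁻¹ * (Cᵀ * C) * (Cᵀ * C)⁻¹ * Cᵀ := by simp only [Matrix.mul_assoc]
    _ = C * (Cᵀ * C)⁻¹ * Cᵀ := by rw [this]

theorem trace_hatMatrix [DecidableEq n] {C : Matrix m n ℝ} (hC : Function.Injective C.mulVec) :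
    (hatMatrix C).trace = Fintype.card n := by
  rw [hatMatrix, trace_mul_comm, ← Matrix.mul_assoc,
    mul_nonsing_inv _ (isUnit_det_transpose_mul_self hC), trace_one]

theorem IsSymm.apply_self_mem_Icc_of_isIdempotentElem {P : Matrix m m ℝ} (hPs : P.IsSymm)
    (hPP : IsIdempotentElem P) (i : m) : P i i ∈ Set.Icc 0 1 := by
  have hsq : P i i = ∑ j, P i j ^ 2 := by
    conv_lhs => rw [← hPP.eq]
    simp only [mul_apply, sq]
    exact Finset.sum_congr rfl fun j _ => by rw [hPs.apply i j]
  have hle : P i i ^ 2 ≤ P i i :=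
    hsq ▸ Finset.single_le_sum (f := fun j => P i j ^ 2) (fun j _ => sq_nonneg _)
      (Finset.mem_univ i)
  have hnonneg : 0 ≤ P i i := hsq ▸ Finset.sum_nonneg fun j _ => sq_nonneg _
  exact ⟨hnonneg, by nlinarith⟩

end Matrix

namespace PolytopeWalks

section Exponent

variable {d m : ℕ}

theorem two_le_two_mul_div (hd : 0 < d) (hdm : d ≤ m) : (2 : ℝ) ≤ 2 * m / d := by
  rw [le_div_iff₀ (by positivity)]
  have : (d : ℝ) ≤ m := by exact_mod_cast hdm
  linarith

theorem one_sub_alphaJ_mem_Ioc (hd : 0 < d) (hdm : d ≤ m) : 1 - alphaJ d m ∈ Ioc 0 1 := by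
  have hlog : 1 ≤ logb 2 (2 * m / d) := by
    rw [le_logb_iff_rpow_le one_lt_two (by linarith [two_le_two_mul_div hd hdm]), rpow_one]
    exact two_le_two_mul_div hd hdm
  rw [alphaJ, sub_sub_cancel]
  exact ⟨by positivity, (div_le_one (by linarith)).mpr hlog⟩

theorem betaJ_rpow_one_sub_alphaJ (hd : 0 < d) (hdm : d ≤ m) :
    betaJ d m ^ (1 - alphaJ d m) = 2⁻¹ := by
  have ht := two_le_two_mul_div hd hdm
  have hβ : betaJ d m = (2 * m / d : ℝ)⁻¹ := by rw [betaJ, inv_div]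
  rw [hβ, alphaJ, sub_sub_cancel, one_div, inv_logb, inv_rpow (by linarith),
    rpow_logb (by linarith) (by linarith) two_pos]

theorem rpow_one_sub_alphaJ_mem_Icc (hd : 0 < d) (hdm : d ≤ m) {t : ℝ}
    (ht : t ∈ Icc (betaJ d m) (1 + betaJ d m)) : t ^ (1 - alphaJ d m) ∈ Icc 2⁻¹ 2 := by
  obtain ⟨he0, he1⟩ := one_sub_alphaJ_mem_Ioc hd hdm
  have hdm' : (d : ℝ) ≤ m := by exact_mod_cast hdm
  have hd' : (0 : ℝ) < d := by exact_mod_cast hd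
  have hβ : 0 < betaJ d m := by rw [betaJ]; exact div_pos hd' (by linarith)
  have hβ2 : betaJ d m ≤ 2⁻¹ := by
    rw [betaJ, div_le_iff₀ (by linarith)]
    linarith
  constructor
  · rw [← betaJ_rpow_one_sub_alphaJ hd hdm]
    exact rpow_le_rpow hβ.le ht.1 he0.le
  · rcases le_total t 1 with h | h
    · exact (rpow_le_one (hβ.le.trans ht.1) h he0.le).trans one_le_two
    · linarith [rpow_le_self_of_one_le h he1, ht.2]

theorem rpow_div_two_sq {t : ℝ} (ht : 0 ≤ t) (r : ℝ) : (t ^ (r / 2)) ^ 2 = t ^ r := by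
  rw [← rpow_natCast, ← rpow_mul ht]
  norm_num

end Exponent

section John

variable {d m : ℕ} {A : Matrix (Fin m) (Fin d) ℝ} {b : Fin m → ℝ} {x : Fin d → ℝ}
  {w : Fin m → ℝ}

theorem Amat_apply_row (i : Fin m) : Amat A b x i = (slack A b x i)⁻¹ • A i := by
  ext j
  simp [Amat, div_eq_inv_mul]

theorem Amat_mulVec_apply (u : Fin d → ℝ) (i : Fin m) :
    (Amat A b x *ᵥ u) i = (A *ᵥ u) i / slack A b x i := by
  rw [mulVec, Amat_apply_row, smul_dotProduct, smul_eq_mul, inv_mul_eq_div]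
  rfl

theorem Amat_mulVec_injective (hrank : A.rank = d) (hx : x ∈ interiorPoly A b) :
    Function.Injective (Amat A b x).mulVec := by
  refine fun u v huv =>
    mulVec_injective_of_rank_eq_card (by simpa using hrank) (funext fun i => ?_)
  have := congrFun huv i
  rwa [Amat_mulVec_apply, Amat_mulVec_apply, div_left_inj' (hx i).ne'] at this

theorem johnMat_eq : johnMat A b x w = (Amat A b x)ᵀ * diagonal w * Amat A b x := by
  ext j k
  rw [mul_apply]
  simp only [johnMat, Matrix.sum_apply, Matrix.smul_apply, vecMulVec_apply, smul_eq_mul,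
    mul_diagonal, transpose_apply, Amat, of_apply]
  exact Finset.sum_congr rfl fun i _ => by ring

theorem dotProduct_mulVec_div_slack_sq (N : Matrix (Fin d) (Fin d) ℝ) (i : Fin m) :
    A i ⬝ᵥ N *ᵥ A i / slack A b x i ^ 2 = Amat A b x i ⬝ᵥ N *ᵥ Amat A b x i := by
  rw [Amat_apply_row, mulVec_smul, dotProduct_smul, smul_dotProduct, smul_eq_mul, smul_eq_mul]
  ring

theorem johnProj_eq_hatMatrix (hw : ∀ i, 0 < w i) :
    johnProj A b x w = hatMatrix (diagonal (fun i => w i ^ (alphaJ d m / 2)) * Amat A b x) := by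
  rw [hatMatrix, transpose_diagonal_mul_mul_self]
  simp only [rpow_div_two_sq (hw _).le, johnProj, transpose_mul, diagonal_transpose,
    Matrix.mul_assoc]

theorem johnProj_apply_self (hw : ∀ i, 0 < w i) (i : Fin m) :
    johnProj A b x w i i = w i ^ alphaJ d m * (Amat A b x i ⬝ᵥ
      ((Amat A b x)ᵀ * diagonal (fun i => w i ^ alphaJ d m) * Amat A b x)⁻¹ *ᵥ
        Amat A b x i) := by
  rw [johnProj_eq_hatMatrix hw, hatMatrix_diagonal_mul_apply_self]
  simp only [rpow_div_two_sq (hw _).le]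

theorem mulVec_injective_rpow_diagonal_mul_Amat (hrank : A.rank = d) (hx : x ∈ interiorPoly A b)
    (hw : ∀ i, 0 < w i) :
    Function.Injective (diagonal (fun i => w i ^ (alphaJ d m / 2)) * Amat A b x).mulVec :=
  mulVec_injective_diagonal_mul (fun i => (rpow_pos_of_pos (hw i) _).ne')
    (Amat_mulVec_injective hrank hx)

theorem johnProj_apply_self_mem_Icc (hrank : A.rank = d) (hx : x ∈ interiorPoly A b)
    (hw : ∀ i, 0 < w i) (i : Fin m) : johnProj A b x w i i ∈ Icc 0 1 := by
  rw [johnProj_eq_hatMatrix hw]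
  exact (isSymm_hatMatrix _).apply_self_mem_Icc_of_isIdempotentElem
    (isIdempotentElem_hatMatrix (mulVec_injective_rpow_diagonal_mul_Amat hrank hx hw)) i

theorem trace_johnProj (hrank : A.rank = d) (hx : x ∈ interiorPoly A b) (hw : ∀ i, 0 < w i) :
    (johnProj A b x w).trace = d := by
  rw [johnProj_eq_hatMatrix hw,
    trace_hatMatrix (mulVec_injective_rpow_diagonal_mul_Amat hrank hx hw), Fintype.card_fin]

theorem IsJohnWeight.mem_Icc (hrank : A.rank = d) (hx : x ∈ interiorPoly A b)
    (hw : IsJohnWeight A b x w) (i : Fin m) : w i ∈ Icc (betaJ d m) (1 + betaJ d m) := by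
  obtain ⟨h0, h1⟩ := johnProj_apply_self_mem_Icc hrank hx hw.1 i
  rw [hw.2 i]
  constructor <;> linarith

theorem IsJohnWeight.sum_eq (hm : m ≠ 0) (hrank : A.rank = d) (hx : x ∈ interiorPoly A b)
    (hw : IsJohnWeight A b x w) : ∑ i, w i = 3 * (d : ℝ) / 2 := by
  have htr := trace_johnProj hrank hx hw.1
  rw [trace] at htr
  simp only [diag_apply] at htr
  rw [Finset.sum_congr rfl fun i _ => hw.2 i, Finset.sum_add_distrib, htr, Finset.sum_const,
    Finset.card_univ, Fintype.card_fin, nsmul_eq_mul, betaJ]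
  field_simp
  ring

theorem IsJohnWeight.sensitivity_mem_Icc (hd : 0 < d) (hdm : d ≤ m) (hrank : A.rank = d)
    (hx : x ∈ interiorPoly A b) (hw : IsJohnWeight A b x w) (i : Fin m) :
    A i ⬝ᵥ (johnMat A b x w)⁻¹ *ᵥ A i / slack A b x i ^ 2 ∈ Icc 0 4 := by
  set α := alphaJ d m
  set Ax := Amat A b x
  have hinj := Amat_mulVec_injective hrank hx
  have hsplit : ∀ j, w j ^ α * w j ^ (1 - α) = w j := fun j => by
    rw [← rpow_add (hw.1 j), add_sub_cancel, rpow_one]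
  have hpow : ∀ j, w j ^ (1 - α) ∈ Icc 2⁻¹ 2 := fun j =>
    rpow_one_sub_alphaJ_mem_Icc hd hdm (hw.mem_Icc hrank hx j)
  have hwα : ∀ j, 0 < w j ^ α := fun j => rpow_pos_of_pos (hw.1 j) α
  -- `w_i^α τ_i = w_i - β_J ≤ w_i = w_i^α w_i^(1-α) ≤ 2 w_i^α`, with `τ_i` the left side
  have hτ : Ax i ⬝ᵥ (Axᵀ * diagonal (fun j => w j ^ α) * Ax)⁻¹ *ᵥ Ax i ≤ 2 := by
    have hfix := hw.2 i
    rw [johnProj_apply_self hw.1] at hfix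
    have hβ : 0 ≤ betaJ d m := by rw [betaJ]; positivity
    refine le_of_mul_le_mul_left ?_ (hwα i)
    nlinarith [hsplit i, (hpow i).2, hwα i]
  have hθ : Ax i ⬝ᵥ (Axᵀ * diagonal w * Ax)⁻¹ *ᵥ Ax i ≤
      2 * (Ax i ⬝ᵥ (Axᵀ * diagonal (fun j => w j ^ α) * Ax)⁻¹ *ᵥ Ax i) :=
    dotProduct_inv_transpose_diagonal_mul_mulVec_le_mul hinj hwα two_pos (fun j => by
      nlinarith [hsplit j, (hpow j).1, hwα j]) _
  rw [dotProduct_mulVec_div_slack_sq, johnMat_eq]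
  refine ⟨?_, by linarith⟩
  simpa using
    (posDef_transpose_diagonal_mul hinj hw.1).inv.posSemidef.dotProduct_mulVec_nonneg (Ax i)

end John

/-- Lemma 5, parts (d)–(f): if `w` is a positive solution of the John fixed-point
equations at an interior point `x`, then `w_i ∈ [β_J, 1+β_J]`, `Σ_i w_i = 3d/2`, and
the John slack sensitivities `a_i^⊤ J_x⁻¹ a_i / s_{x,i}²` lie in `[0,4]`. -/
theorem lemma5_parts_def (d m : ℕ) (hd : 0 < d) (hdm : d ≤ m)
    (A : Matrix (Fin m) (Fin d) ℝ) (b : Fin m → ℝ) (hrank : A.rank = d)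
    (x : Fin d → ℝ) (hx : x ∈ interiorPoly A b)
    (w : Fin m → ℝ) (hw : IsJohnWeight A b x w) :
    (∀ i, w i ∈ Set.Icc (betaJ d m) (1 + betaJ d m)) ∧
    (∑ i, w i = 3 * (d : ℝ) / 2) ∧
    (∀ i, (A i) ⬝ᵥ ((johnMat A b x w)⁻¹ *ᵥ (A i)) / (slack A b x i) ^ 2 ∈
      Set.Icc (0 : ℝ) 4) :=
  ⟨hw.mem_Icc hrank hx, hw.sum_eq (by omega) hrank hx, hw.sensitivity_mem_Icc hd hdm hrank hx⟩

end PolytopeWalks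
end
end

section
/- (Lemma 7, eigenvalue sandwich for nearby Vaidya matrices) For any scalar t ∈ [0, 1/12] and any pair of points x, y in the interior of K such that ‖x−y‖_{V_x} ≤ t / (md)^{1/4}, one has (1 − 8t/√d) I_d ⪯ V_x^{-1/2} V_y V_x^{-1/2} ⪯ (1 + 8t/√d) I_d, where ⪯ denotes the positive-semidefinite order and I_d is the d×d identity matrix. -/
/-!
Write `β = d/m`, `θ_i = a_iᵀ V_x⁻¹ a_i / s_i²` and `δ = t/√d`. The single term `i` of `V_x` gives
`(σ_i + β) θ_i ≤ 1`, and `V_x ⪰ β ∇²F_x` gives `β θ_i ≤ σ_i`; multiplying, `θ_i ≤ √(m/d)`.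
Cauchy–Schwarz in the `V_x`-norm then bounds `|a_iᵀ(x - y)|` by `√θ_i s_i ‖x - y‖_{V_x} ≤ δ s_i`,
so every slack at `y` lies in `[(1 - δ) s_i, (1 + δ) s_i]`. Hence `∇²F_y` lies between
`(1 + δ)⁻² ∇²F_x` and `(1 - δ)⁻² ∇²F_x`, the numerators `a_iᵀ (∇²F)⁻¹ a_i` of the leverage
scores move by the factors `(1 ± δ)²`, and every Vaidya weight `(σ_i + β)/s_i²` moves by a factor
in `[1 - 8δ, 1 + 8δ]` (this is where `δ ≤ 1/12` is used). So `(1 - 8δ) V_x ⪯ V_y ⪯ (1 + 8δ) V_x`,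
and conjugating by `V_x^{-1/2}` gives the claim.
-/

open Matrix MeasureTheory Real Set
open scoped ENNReal

noncomputable section

/-- The positive semidefinite square root of a positive semidefinite matrix
(removed from Mathlib; restored with its old definition). -/
def Matrix.PosSemidef.sqrt {n 𝕜 : Type*} [Fintype n] [RCLike 𝕜] [PartialOrder 𝕜] [DecidableEq n]
    {A : Matrix n n 𝕜} (hA : A.PosSemidef) : Matrix n n 𝕜 :=
  (hA.1.eigenvectorUnitary : Matrix n n 𝕜) * diagonal ((↑) ∘ (√·) ∘ hA.1.eigenvalues) *
    (star hA.1.eigenvectorUnitary : Matrix n n 𝕜)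


open scoped MatrixOrder

namespace Matrix

section QuadraticForm

variable {n : Type*} [Fintype n] {M N : Matrix n n ℝ}

theorem PosSemidef.dotProduct_mulVec_nonneg_real (hM : M.PosSemidef) (v : n → ℝ) :
    0 ≤ v ⬝ᵥ M *ᵥ v := by
  simpa using hM.dotProduct_mulVec_nonneg v

theorem dotProduct_mulVec_le_of_le (h : M ≤ N) (v : n → ℝ) :
    v ⬝ᵥ M *ᵥ v ≤ v ⬝ᵥ N *ᵥ v := by
  have := (le_iff.mp h).dotProduct_mulVec_nonneg_real v
  rwa [sub_mulVec, dotProduct_sub, sub_nonneg] at this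

theorem IsHermitian.dotProduct_mulVec_comm (hM : M.IsHermitian) (u v : n → ℝ) :
    u ⬝ᵥ M *ᵥ v = v ⬝ᵥ M *ᵥ u := by
  rw [dotProduct_mulVec, ← mulVec_transpose, ← conjTranspose_eq_transpose_of_trivial, hM.eq,
    dotProduct_comm]

variable [DecidableEq n]

theorem PosDef.mulVec_inv_mulVec (hM : M.PosDef) (a : n → ℝ) : M *ᵥ M⁻¹ *ᵥ a = a := by
  rw [mulVec_mulVec, mul_nonsing_inv _ hM.det_pos.ne'.isUnit, one_mulVec]

theorem PosDef.sq_dotProduct_le (hM : M.PosDef) (a v : n → ℝ) :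
    (a ⬝ᵥ v) ^ 2 ≤ (a ⬝ᵥ M⁻¹ *ᵥ a) * (v ⬝ᵥ M *ᵥ v) := by
  set u := M⁻¹ *ᵥ a
  have hMu : M *ᵥ u = a := hM.mulVec_inv_mulVec a
  have hquad (r : ℝ) : 0 ≤ (a ⬝ᵥ u) * (r * r) + 2 * (a ⬝ᵥ v) * r + v ⬝ᵥ M *ᵥ v := by
    have := hM.posSemidef.dotProduct_mulVec_nonneg_real (r • u + v)
    simp only [mulVec_add, mulVec_smul, hMu, dotProduct_add, add_dotProduct, dotProduct_smul,
      smul_dotProduct, smul_eq_mul, dotProduct_comm u a, dotProduct_comm v a] at this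
    rw [hM.isHermitian.dotProduct_mulVec_comm u v, hMu, dotProduct_comm v a] at this
    linear_combination this
  have := discrim_le_zero hquad
  rw [discrim] at this
  linarith

theorem PosDef.dotProduct_inv_mulVec_le_s7 (hM : M.PosDef) {a : n → ℝ} {C : ℝ} (hC : 0 ≤ C)
    (h : ∀ v, (a ⬝ᵥ v) ^ 2 ≤ C * (v ⬝ᵥ M *ᵥ v)) : a ⬝ᵥ M⁻¹ *ᵥ a ≤ C := by
  have hu := h (M⁻¹ *ᵥ a)
  rw [hM.mulVec_inv_mulVec, dotProduct_comm (M⁻¹ *ᵥ a), sq] at hu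
  rcases (hM.inv.posSemidef.dotProduct_mulVec_nonneg_real a).eq_or_lt with h0 | hpos
  · exact h0 ▸ hC
  · exact le_of_mul_le_mul_right hu hpos

theorem PosDef.mul_dotProduct_inv_mulVec_le (hM : M.PosDef) (hN : N.PosDef) {c : ℝ} (hc : 0 < c)
    (h : c • M ≤ N) (a : n → ℝ) : c * (a ⬝ᵥ N⁻¹ *ᵥ a) ≤ a ⬝ᵥ M⁻¹ *ᵥ a := by
  have hPM := hM.inv.posSemidef.dotProduct_mulVec_nonneg_real a
  rw [← le_div_iff₀' hc]
  refine hN.dotProduct_inv_mulVec_le_s7 (div_nonneg hPM hc.le) fun v => ?_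
  have hMN := dotProduct_mulVec_le_of_le h v
  rw [smul_mulVec, dotProduct_smul, smul_eq_mul] at hMN
  calc (a ⬝ᵥ v) ^ 2 ≤ (a ⬝ᵥ M⁻¹ *ᵥ a) * (v ⬝ᵥ M *ᵥ v) := hM.sq_dotProduct_le a v
    _ ≤ (a ⬝ᵥ M⁻¹ *ᵥ a) / c * (v ⬝ᵥ N *ᵥ v) := by
      rw [div_mul_eq_mul_div, le_div_iff₀ hc, mul_assoc]
      exact mul_le_mul_of_nonneg_left (by linarith) hPM

end QuadraticForm

theorem mulVec_injective_of_rank_eq {K m n : Type*} [Field K] [Fintype m] [Fintype n]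
    {A : Matrix m n K} (h : A.rank = Fintype.card n) : Function.Injective A.mulVec := by
  have hker := A.mulVecLin.finrank_range_add_finrank_ker
  rw [← rank, h, Module.finrank_fintype_fun_eq_card, add_eq_left,
    Submodule.finrank_eq_zero, LinearMap.ker_eq_bot] at hker
  exact hker

section WeightedGram

variable {ι n : Type*} [Fintype ι] (A : Matrix ι n ℝ) {w w' : ι → ℝ}

def weightedGram (w : ι → ℝ) : Matrix n n ℝ :=
  ∑ i, w i • vecMulVec (A i) (A i)

theorem isHermitian_weightedGram (w : ι → ℝ) : (weightedGram A w).IsHermitian := by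
  simp [IsHermitian, conjTranspose_eq_transpose_of_trivial, weightedGram, transpose_sum,
    transpose_vecMulVec]

theorem smul_weightedGram (c : ℝ) (w : ι → ℝ) :
    c • weightedGram A w = weightedGram A (c • w) := by
  simp [weightedGram, Finset.smul_sum, smul_smul]

variable [Fintype n]

theorem dotProduct_weightedGram_mulVec (w : ι → ℝ) (v : n → ℝ) :
    v ⬝ᵥ weightedGram A w *ᵥ v = ∑ i, w i * (A i ⬝ᵥ v) ^ 2 := by
  simp only [weightedGram, sum_mulVec, dotProduct_sum, smul_mulVec, vecMulVec_mulVec,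
    dotProduct_smul, op_smul_eq_smul, smul_eq_mul]
  exact Finset.sum_congr rfl fun i _ => by rw [dotProduct_comm v]; ring

theorem posSemidef_weightedGram (hw : 0 ≤ w) : (weightedGram A w).PosSemidef :=
  .of_dotProduct_mulVec_nonneg (isHermitian_weightedGram A w) fun v => by
    rw [star_trivial, dotProduct_weightedGram_mulVec]
    exact Finset.sum_nonneg fun i _ => mul_nonneg (hw i) (sq_nonneg _)

theorem weightedGram_mono (h : w ≤ w') : weightedGram A w ≤ weightedGram A w' := by
  rw [le_iff, weightedGram, weightedGram, ← Finset.sum_sub_distrib]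
  simp_rw [← sub_smul]
  exact posSemidef_weightedGram A (sub_nonneg.mpr h)

theorem posDef_weightedGram (hA : Function.Injective A.mulVec) (hw : ∀ i, 0 < w i) :
    (weightedGram A w).PosDef := by
  refine .of_dotProduct_mulVec_pos (isHermitian_weightedGram A w) fun v hv => ?_
  obtain ⟨i, hi⟩ : ∃ i, A i ⬝ᵥ v ≠ 0 := by
    by_contra! h
    exact hv (hA (by rw [mulVec_zero]; ext i; exact h i))
  rw [star_trivial, dotProduct_weightedGram_mulVec]
  exact Finset.sum_pos' (fun j _ => mul_nonneg (hw j).le (sq_nonneg _))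
    ⟨i, Finset.mem_univ i, mul_pos (hw i) (pow_two_pos_of_ne_zero hi)⟩

theorem mul_dotProduct_inv_weightedGram_le_one [DecidableEq n] (hw : 0 ≤ w)
    (hG : (weightedGram A w).PosDef) (i : ι) :
    w i * (A i ⬝ᵥ (weightedGram A w)⁻¹ *ᵥ A i) ≤ 1 := by
  rcases (hw i).eq_or_lt with hwi | hwi
  · simp [← hwi]
  have hrow (v : n → ℝ) : (A i ⬝ᵥ v) ^ 2 ≤ (w i)⁻¹ * (v ⬝ᵥ weightedGram A w *ᵥ v) := by
    rw [dotProduct_weightedGram_mulVec, ← div_eq_inv_mul, le_div_iff₀' hwi]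
    exact Finset.single_le_sum (f := fun j => w j * (A j ⬝ᵥ v) ^ 2)
      (fun j _ => mul_nonneg (hw j) (sq_nonneg _)) (Finset.mem_univ i)
  calc w i * (A i ⬝ᵥ (weightedGram A w)⁻¹ *ᵥ A i) ≤ w i * (w i)⁻¹ :=
        mul_le_mul_of_nonneg_left (hG.dotProduct_inv_mulVec_le_s7 (inv_nonneg.mpr hwi.le) hrow) hwi.le
    _ = 1 := mul_inv_cancel₀ hwi.ne'

end WeightedGram

section Conjugation

variable {n : Type*} [Fintype n] [DecidableEq n]

theorem PosSemidef.sqrt_mul_self {V : Matrix n n ℝ} (hV : V.PosSemidef) :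
    hV.sqrt * hV.sqrt = V := by
  set U : Matrix n n ℝ := (hV.1.eigenvectorUnitary : Matrix n n ℝ)
  set D : Matrix n n ℝ := diagonal ((RCLike.ofReal : ℝ → ℝ) ∘ (√·) ∘ hV.1.eigenvalues)
  have hU : star U * U = 1 := Unitary.coe_star_mul_self _
  have hD : D * D = diagonal ((RCLike.ofReal : ℝ → ℝ) ∘ hV.1.eigenvalues) := by
    rw [diagonal_mul_diagonal]
    congr 1
    ext i
    simp [Real.mul_self_sqrt (hV.eigenvalues_nonneg i)]
  calc hV.sqrt * hV.sqrt = U * (D * (star U * U) * D) * star U := by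
        simp only [PosSemidef.sqrt, U, D, Matrix.mul_assoc]
    _ = V := by
        rw [hU, Matrix.mul_one, hD]
        conv_rhs => rw [hV.1.spectral_theorem, Unitary.conjStarAlgAut_apply]

theorem PosSemidef.isHermitian_sqrt {V : Matrix n n ℝ} (hV : V.PosSemidef) :
    hV.sqrt.IsHermitian := by
  have := (PosSemidef.diagonal (d := (RCLike.ofReal : ℝ → ℝ) ∘ (√·) ∘ hV.1.eigenvalues)
    fun _ => Real.sqrt_nonneg _).mul_mul_conjTranspose_same (hV.1.eigenvectorUnitary : Matrix n n ℝ)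
  rw [← star_eq_conjTranspose] at this
  exact this.isHermitian

variable {S V N : Matrix n n ℝ}

theorem inv_mul_mul_inv_eq_one (hSV : S * S = V) (hV : IsUnit V.det) : S⁻¹ * V * S⁻¹ = 1 := by
  have hS : IsUnit S.det := by
    rw [← hSV, det_mul] at hV
    exact (IsUnit.mul_iff.mp hV).1
  rw [← hSV, ← Matrix.mul_assoc, nonsing_inv_mul _ hS, Matrix.one_mul, mul_nonsing_inv _ hS]

theorem smul_one_le_inv_mul_mul_inv (hS : S.IsHermitian) (hSV : S * S = V) (hV : IsUnit V.det)
    {c : ℝ} (h : c • V ≤ N) : c • 1 ≤ S⁻¹ * N * S⁻¹ := by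
  have := (isHermitian_iff_isSelfAdjoint.mp hS.inv).conjugate_le_conjugate h
  rwa [Matrix.mul_smul, Matrix.smul_mul, inv_mul_mul_inv_eq_one hSV hV] at this

theorem inv_mul_mul_inv_le_smul_one (hS : S.IsHermitian) (hSV : S * S = V) (hV : IsUnit V.det)
    {c : ℝ} (h : N ≤ c • V) : S⁻¹ * N * S⁻¹ ≤ c • 1 := by
  have := (isHermitian_iff_isSelfAdjoint.mp hS.inv).conjugate_le_conjugate h
  rwa [Matrix.mul_smul, Matrix.smul_mul, inv_mul_mul_inv_eq_one hSV hV] at this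

end Conjugation

end Matrix

namespace PolytopeWalks

theorem vaidya_weight_le {β δ P P' s s' : ℝ} (hβ : 0 ≤ β) (hδ : 0 ≤ δ) (hδ' : δ ≤ 1 / 12)
    (hP : 0 ≤ P) (hs : 0 < s) (hP' : P' ≤ (1 + δ) ^ 2 * P) (hs' : (1 - δ) * s ≤ s') :
    (P' / s' ^ 2 + β) / s' ^ 2 ≤ (1 + 8 * δ) * ((P / s ^ 2 + β) / s ^ 2) := by
  have hr : 0 < 1 - δ := by linarith
  have hrs : 0 < (1 - δ) * s := mul_pos hr hs
  calc (P' / s' ^ 2 + β) / s' ^ 2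
      ≤ ((1 + δ) ^ 2 * P / ((1 - δ) * s) ^ 2 + β) / ((1 - δ) * s) ^ 2 := by gcongr
    _ = (1 + δ) ^ 2 / (1 - δ) ^ 4 * (P / s ^ 4) + 1 / (1 - δ) ^ 2 * (β / s ^ 2) := by
        field_simp
    _ ≤ (1 + 8 * δ) * (P / s ^ 4) + (1 + 8 * δ) * (β / s ^ 2) := by
        gcongr
        · rw [div_le_iff₀ (by positivity)]
          nlinarith [mul_nonneg hδ hδ, mul_nonneg (mul_nonneg hδ hδ) hδ,
            mul_nonneg (mul_nonneg (mul_nonneg hδ hδ) hδ) hδ]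
        · rw [div_le_iff₀ (by positivity)]
          nlinarith [mul_nonneg hδ hδ]
    _ = (1 + 8 * δ) * ((P / s ^ 2 + β) / s ^ 2) := by field_simp

theorem le_vaidya_weight {β δ P P' s s' : ℝ} (hβ : 0 ≤ β) (hδ : 0 ≤ δ) (hP : 0 ≤ P)
    (hs : 0 < s) (hP' : (1 - δ) ^ 2 * P ≤ P') (hs'0 : 0 < s') (hs' : s' ≤ (1 + δ) * s) :
    (1 - 8 * δ) * ((P / s ^ 2 + β) / s ^ 2) ≤ (P' / s' ^ 2 + β) / s' ^ 2 := by
  have hP'0 : 0 ≤ P' := le_trans (by positivity) hP'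
  calc (1 - 8 * δ) * ((P / s ^ 2 + β) / s ^ 2)
      = (1 - 8 * δ) * (P / s ^ 4) + (1 - 8 * δ) * (β / s ^ 2) := by field_simp
    _ ≤ (1 - δ) ^ 2 / (1 + δ) ^ 4 * (P / s ^ 4) + 1 / (1 + δ) ^ 2 * (β / s ^ 2) := by
        gcongr
        · rw [le_div_iff₀ (by positivity)]
          nlinarith [mul_nonneg hδ hδ, mul_nonneg (mul_nonneg hδ hδ) hδ,
            mul_nonneg (mul_nonneg (mul_nonneg hδ hδ) hδ) hδ,
            mul_nonneg (mul_nonneg (mul_nonneg (mul_nonneg hδ hδ) hδ) hδ) hδ]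
        · rw [le_div_iff₀ (by positivity)]
          nlinarith [mul_nonneg hδ hδ, mul_nonneg (mul_nonneg hδ hδ) hδ]
    _ = ((1 - δ) ^ 2 * P / ((1 + δ) * s) ^ 2 + β) / ((1 + δ) * s) ^ 2 := by field_simp
    _ ≤ (P' / s' ^ 2 + β) / s' ^ 2 := by gcongr

variable {d m : ℕ} {A : Matrix (Fin m) (Fin d) ℝ} {b : Fin m → ℝ} {x y : Fin d → ℝ}

theorem logHess_eq_weightedGram :
    logHess A b x = A.weightedGram fun i => (slack A b x i ^ 2)⁻¹ := rfl

theorem vaidyaMat_eq_weightedGram :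
    vaidyaMat A b x = A.weightedGram fun i => (lev A b x i + (d : ℝ) / m) / slack A b x i ^ 2 :=
  rfl

theorem slack_eq_add (i : Fin m) : slack A b y i = slack A b x i + A i ⬝ᵥ (x - y) := by
  simp only [slack, mulVec, dotProduct_sub]
  ring

theorem logHess_posDef (hA : Function.Injective A.mulVec) (hx : x ∈ interiorPoly A b) :
    (logHess A b x).PosDef :=
  posDef_weightedGram A hA fun i => inv_pos.mpr (pow_pos (hx i) 2)

theorem lev_nonneg (hA : Function.Injective A.mulVec) (hx : x ∈ interiorPoly A b) (i : Fin m) :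
    0 ≤ lev A b x i :=
  div_nonneg ((logHess_posDef hA hx).inv.posSemidef.dotProduct_mulVec_nonneg_real _) (sq_nonneg _)

theorem vaidyaMat_posDef (hA : Function.Injective A.mulVec) (hd : 0 < d) (hdm : d ≤ m)
    (hx : x ∈ interiorPoly A b) : (vaidyaMat A b x).PosDef := by
  have hm : 0 < m := hd.trans_le hdm
  exact posDef_weightedGram A hA fun i =>
    div_pos (add_pos_of_nonneg_of_pos (lev_nonneg hA hx i) (by positivity)) (pow_pos (hx i) 2)

theorem smul_logHess_le_vaidyaMat (hA : Function.Injective A.mulVec) (hx : x ∈ interiorPoly A b) :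
    ((d : ℝ) / m) • logHess A b x ≤ vaidyaMat A b x := by
  rw [logHess_eq_weightedGram, vaidyaMat_eq_weightedGram, smul_weightedGram]
  refine weightedGram_mono A fun i => ?_
  rw [Pi.smul_apply, smul_eq_mul, ← div_eq_mul_inv]
  gcongr
  exact le_add_of_nonneg_left (lev_nonneg hA hx i)

theorem thetaV_le (hA : Function.Injective A.mulVec) (hd : 0 < d) (hdm : d ≤ m)
    (hx : x ∈ interiorPoly A b) (i : Fin m) : thetaV A b x i ≤ √((m : ℝ) / d) := by
  have hm : 0 < m := hd.trans_le hdm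
  have hβ : (0 : ℝ) < d / m := by positivity
  have hs : 0 < slack A b x i := hx i
  have hV := vaidyaMat_posDef hA hd hdm hx
  have hσ := lev_nonneg hA hx i
  set PV := A i ⬝ᵥ (vaidyaMat A b x)⁻¹ *ᵥ A i
  have hPV : 0 ≤ PV := hV.inv.posSemidef.dotProduct_mulVec_nonneg_real _
  have hPH : A i ⬝ᵥ (logHess A b x)⁻¹ *ᵥ A i = lev A b x i * slack A b x i ^ 2 := by
    rw [lev, div_mul_cancel₀ _ (pow_pos hs 2).ne']
  have hV_row : (lev A b x i + d / m) / slack A b x i ^ 2 * PV ≤ 1 :=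
    mul_dotProduct_inv_weightedGram_le_one A
      (fun j => div_nonneg (add_nonneg (lev_nonneg hA hx j) hβ.le) (sq_nonneg _)) hV i
  have hV_ge_H : d / m * PV ≤ lev A b x i * slack A b x i ^ 2 :=
    hPH ▸ (logHess_posDef hA hx).mul_dotProduct_inv_mulVec_le hV hβ
      (smul_logHess_le_vaidyaMat hA hx) (A i)
  rw [div_mul_eq_mul_div, div_le_one (by positivity)] at hV_row
  have hsq : d / m * PV ^ 2 ≤ (slack A b x i ^ 2) ^ 2 :=
    calc d / m * PV ^ 2 = PV * (d / m * PV) := by ring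
      _ ≤ PV * (lev A b x i * slack A b x i ^ 2) := mul_le_mul_of_nonneg_left hV_ge_H hPV
      _ ≤ (lev A b x i + d / m) * PV * slack A b x i ^ 2 := by
        nlinarith [mul_nonneg (mul_nonneg hβ.le hPV) (sq_nonneg (slack A b x i))]
      _ ≤ (slack A b x i ^ 2) ^ 2 := by rw [sq (slack A b x i ^ 2)]; gcongr
  refine (le_abs_self _).trans (Real.abs_le_sqrt ?_)
  rw [thetaV, div_pow, div_le_div_iff₀ (by positivity) (by positivity)]
  rw [div_mul_eq_mul_div, div_le_iff₀ (by positivity)] at hsq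
  linarith

theorem sq_dotProduct_le_of_vNorm_le (hA : Function.Injective A.mulVec) (hd : 0 < d)
    (hdm : d ≤ m) (hx : x ∈ interiorPoly A b) {t : ℝ} {v : Fin d → ℝ}
    (hv : vNorm A b x v ≤ t / ((m : ℝ) * d) ^ ((1 : ℝ) / 4)) (i : Fin m) :
    (A i ⬝ᵥ v) ^ 2 ≤ (t / √d * slack A b x i) ^ 2 := by
  have hm : 0 < m := hd.trans_le hdm
  have hV := vaidyaMat_posDef hA hd hdm hx
  have hq0 := hV.posSemidef.dotProduct_mulVec_nonneg_real v
  have hq : v ⬝ᵥ vaidyaMat A b x *ᵥ v ≤ t ^ 2 / √(m * d) := by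
    have h4 : (((m : ℝ) * d) ^ ((1 : ℝ) / 4)) ^ 2 = √(m * d) := by
      rw [← Real.rpow_natCast, ← Real.rpow_mul (by positivity), Real.sqrt_eq_rpow]
      norm_num
    rw [← h4, ← div_pow, ← Real.sq_sqrt hq0]
    exact pow_le_pow_left₀ (Real.sqrt_nonneg _) hv 2
  have hθ := thetaV_le hA hd hdm hx i
  rw [thetaV, div_le_iff₀ (pow_pos (hx i) 2)] at hθ
  calc (A i ⬝ᵥ v) ^ 2
      ≤ (A i ⬝ᵥ (vaidyaMat A b x)⁻¹ *ᵥ A i) * (v ⬝ᵥ vaidyaMat A b x *ᵥ v) :=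
        hV.sq_dotProduct_le _ _
    _ ≤ (√(m / d) * slack A b x i ^ 2) * (t ^ 2 / √(m * d)) :=
        mul_le_mul hθ hq hq0 (by positivity)
    _ = (t / √d * slack A b x i) ^ 2 := by
        rw [Real.sqrt_div (Nat.cast_nonneg _), Real.sqrt_mul (Nat.cast_nonneg _)]
        field_simp

theorem slack_mem_Icc {δ : ℝ} (hδ : 0 ≤ δ) (hx : x ∈ interiorPoly A b) (i : Fin m)
    (h : (A i ⬝ᵥ (x - y)) ^ 2 ≤ (δ * slack A b x i) ^ 2) :
    slack A b y i ∈ Icc ((1 - δ) * slack A b x i) ((1 + δ) * slack A b x i) := by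
  obtain ⟨hlo, hhi⟩ := abs_le_of_sq_le_sq' h (mul_nonneg hδ (hx i).le)
  rw [slack_eq_add (x := x) (y := y)]
  constructor <;> linarith

theorem sq_mul_dotProduct_logHess_inv_le (hA : Function.Injective A.mulVec)
    (hx : x ∈ interiorPoly A b) (hy : y ∈ interiorPoly A b) {c : ℝ} (hc : 0 < c)
    (h : ∀ i, c * slack A b x i ≤ slack A b y i) (a : Fin d → ℝ) :
    c ^ 2 * (a ⬝ᵥ (logHess A b x)⁻¹ *ᵥ a) ≤ a ⬝ᵥ (logHess A b y)⁻¹ *ᵥ a := by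
  refine (logHess_posDef hA hy).mul_dotProduct_inv_mulVec_le (logHess_posDef hA hx)
    (by positivity) ?_ a
  rw [logHess_eq_weightedGram, logHess_eq_weightedGram, smul_weightedGram]
  refine weightedGram_mono A fun i => ?_
  rw [Pi.smul_apply, smul_eq_mul, ← div_eq_mul_inv, inv_eq_one_div,
    div_le_div_iff₀ (pow_pos (hy i) 2) (pow_pos (hx i) 2), one_mul, ← mul_pow]
  exact pow_le_pow_left₀ (mul_pos hc (hx i)).le (h i) 2

theorem vaidyaMat_sandwich (hA : Function.Injective A.mulVec) (hx : x ∈ interiorPoly A b)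
    (hy : y ∈ interiorPoly A b) {δ : ℝ} (hδ : 0 ≤ δ) (hδ' : δ ≤ 1 / 12)
    (hslack : ∀ i, slack A b y i ∈ Icc ((1 - δ) * slack A b x i) ((1 + δ) * slack A b x i)) :
    (1 - 8 * δ) • vaidyaMat A b x ≤ vaidyaMat A b y ∧
      vaidyaMat A b y ≤ (1 + 8 * δ) • vaidyaMat A b x := by
  have hβ : (0 : ℝ) ≤ d / m := by positivity
  have hPX (i : Fin m) : 0 ≤ A i ⬝ᵥ (logHess A b x)⁻¹ *ᵥ A i :=
    (logHess_posDef hA hx).inv.posSemidef.dotProduct_mulVec_nonneg_real _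
  have hP_lo (i : Fin m) := sq_mul_dotProduct_logHess_inv_le hA hx hy (by linarith)
    (fun j => (hslack j).1) (A i)
  have hP_hi (i : Fin m) : A i ⬝ᵥ (logHess A b y)⁻¹ *ᵥ A i ≤
      (1 + δ) ^ 2 * (A i ⬝ᵥ (logHess A b x)⁻¹ *ᵥ A i) := by
    have := sq_mul_dotProduct_logHess_inv_le hA hy hx (c := (1 + δ)⁻¹) (by positivity)
      (fun j => (inv_mul_le_iff₀ (by positivity)).mpr (hslack j).2) (A i)
    rwa [inv_pow, inv_mul_le_iff₀ (by positivity)] at this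
  rw [vaidyaMat_eq_weightedGram, vaidyaMat_eq_weightedGram, smul_weightedGram, smul_weightedGram]
  exact ⟨weightedGram_mono A fun i =>
      le_vaidya_weight hβ hδ (hPX i) (hx i) (hP_lo i) (hy i) (hslack i).2,
    weightedGram_mono A fun i =>
      vaidya_weight_le hβ hδ hδ' (hPX i) (hx i) (hP_hi i) (hslack i).1⟩

/-- Lemma 7 (eigenvalue sandwich for nearby Vaidya matrices): if
`‖x−y‖_{V_x} ≤ t/(md)^{1/4}` with `t ∈ [0,1/12]`, then
`(1 − 8t/√d) I ⪯ V_x^{-1/2} V_y V_x^{-1/2} ⪯ (1 + 8t/√d) I` in the PSD order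
(here `V_x^{-1/2}` is the inverse of the PSD square root of `V_x`). -/
theorem lemma7_eigenvalue_sandwich (d m : ℕ) (hd : 0 < d) (hdm : d ≤ m)
    (A : Matrix (Fin m) (Fin d) ℝ) (b : Fin m → ℝ) (hrank : A.rank = d)
    (t : ℝ) (ht : t ∈ Set.Icc (0 : ℝ) (1 / 12))
    (x y : Fin d → ℝ) (hx : x ∈ interiorPoly A b) (hy : y ∈ interiorPoly A b)
    (hnear : vNorm A b x (x - y) ≤ t / ((m : ℝ) * d) ^ ((1 : ℝ) / 4))
    (hpsd : (vaidyaMat A b x).PosSemidef) :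
    (hpsd.sqrt⁻¹ * vaidyaMat A b y * hpsd.sqrt⁻¹ -
        (1 - 8 * t / Real.sqrt d) • (1 : Matrix (Fin d) (Fin d) ℝ)).PosSemidef ∧
    ((1 + 8 * t / Real.sqrt d) • (1 : Matrix (Fin d) (Fin d) ℝ) -
        hpsd.sqrt⁻¹ * vaidyaMat A b y * hpsd.sqrt⁻¹).PosSemidef := by
  have hA : Function.Injective A.mulVec := mulVec_injective_of_rank_eq (by rwa [Fintype.card_fin])
  obtain ⟨ht0, ht1⟩ := ht
  have hδ0 : 0 ≤ t / √d := div_nonneg ht0 (Real.sqrt_nonneg _)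
  have hδ1 : t / √d ≤ 1 / 12 :=
    (div_le_self ht0 (Real.one_le_sqrt.mpr (by exact_mod_cast hd))).trans ht1
  obtain ⟨hlo, hhi⟩ := vaidyaMat_sandwich hA hx hy hδ0 hδ1 fun i =>
    slack_mem_Icc hδ0 hx i (sq_dotProduct_le_of_vNorm_le hA hd hdm hx hnear i)
  have hS := hpsd.isHermitian_sqrt
  have hSV := hpsd.sqrt_mul_self
  have hV := (vaidyaMat_posDef hA hd hdm hx).det_pos.ne'.isUnit
  simp only [mul_div_assoc]
  exact ⟨le_iff.mp (smul_one_le_inv_mul_mul_inv hS hSV hV hlo),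
    le_iff.mp (inv_mul_mul_inv_le_smul_one hS hSV hV hhi)⟩

end PolytopeWalks
end
end

section
/- (Lemma: entrywise bounds for M = (G − αΛ)^{-1} G) Let x be in the interior of K and let w be a positive vector satisfying the John fixed-point equations at x. Define G = diag(w), Λ = Σ_{x,w} − P_{x,w}^{(2)}, κ = (1−α)^{-1} = log₂(2m/d), and let M = (G − αΛ)^{-1} G with entries M_{ij}. Then for every i ∈ [m]: (i) M_{ii} ∈ [0, κ]; and (ii) Σ_{j ≠ i} M_{ij}² / w_j ≤ κ³. -/
/-!
Since `w = diag P + β` with `β ≥ 0` and `α = 1 - 1/κ`, the matrix `G - αΛ` splits as `D + H` with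
`D = diag δ`, `δ = w - α diag P ≥ w/κ`, and `H = α (P ⊙ P)` positive semidefinite (Schur product
theorem). Let `u` be the `i`-th column of `(D + H)⁻¹`. Then `uᵀ(D + H)u = uᵢ` gives
`Σⱼ δⱼ uⱼ² ≤ uᵢ`, so `0 ≤ uᵢ ≤ 1/δᵢ`, which is (i). Off the diagonal `δⱼ uⱼ = -(H u)ⱼ`, and
`u + D⁻¹ H u = D⁻¹ eᵢ`; polarizing the `H`-form at `u` and `D⁻¹ H u` gives
`4 Σ_{j ≠ i} δⱼ uⱼ² ≤ Hᵢᵢ / δᵢ² ≤ κ²`, and `w ≤ κ δ` turns this into (ii).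
-/

open Matrix MeasureTheory Real Set
open scoped ENNReal

noncomputable section

namespace PolytopeWalks

/-- The diagonal matrix `G = diag(w)`. -/
def Gmat {m : ℕ} (w : Fin m → ℝ) : Matrix (Fin m) (Fin m) ℝ := Matrix.diagonal w

/-- `Λ = Σ_{x,w} − P_{x,w}^{(2)}`: diagonal of the weighted projection minus its
Hadamard square. -/
def lamMat {d m : ℕ} (A : Matrix (Fin m) (Fin d) ℝ) (b : Fin m → ℝ) (x : Fin d → ℝ)
    (w : Fin m → ℝ) : Matrix (Fin m) (Fin m) ℝ :=
  Matrix.diagonal (fun i => johnProj A b x w i i) - hadSq (johnProj A b x w)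

end PolytopeWalks

lemma le_mul_sub_one_sub_one_div_mul {p w κ : ℝ} (hpw : p ≤ w) (hκ : 1 ≤ κ) :
    w ≤ κ * (w - (1 - 1 / κ) * p) := by
  have hκ0 : κ ≠ 0 := by positivity
  rw [show κ * (w - (1 - 1 / κ) * p) = w + (κ - 1) * (w - p) by field_simp; ring]
  nlinarith [mul_nonneg (sub_nonneg.2 hκ) (sub_nonneg.2 hpw)]

namespace Matrix

variable {n : Type*}

section Polarization

variable [Fintype n]

lemma PosSemidef.four_mul_dotProduct_mulVec_le {H : Matrix n n ℝ} (hH : H.PosSemidef)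
    (a b : n → ℝ) : 4 * (a ⬝ᵥ H *ᵥ b) ≤ (a + b) ⬝ᵥ H *ᵥ (a + b) := by
  have hsymm : b ⬝ᵥ H *ᵥ a = a ⬝ᵥ H *ᵥ b := by
    rw [dotProduct_mulVec, dotProduct_comm, ← mulVec_transpose,
      ← conjTranspose_eq_transpose_of_trivial, hH.isHermitian.eq]
  have hsub := hH.dotProduct_mulVec_nonneg (a - b)
  simp only [star_trivial, mulVec_add, mulVec_sub, dotProduct_add, add_dotProduct,
    dotProduct_sub, sub_dotProduct] at hsub ⊢
  linarith

end Polarization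

variable [DecidableEq n]

lemma diagonal_sub_smul_diagonal_sub_hadamard (w : n → ℝ) (P : Matrix n n ℝ) (c : ℝ) :
    diagonal w - c • (diagonal (fun j => P j j) - P ⊙ P) =
      diagonal (fun j => w j - c * P j j) + c • (P ⊙ P) := by
  ext j k
  rcases eq_or_ne j k with rfl | hjk
  · simp; ring
  · simp [hjk]

lemma PosSemidef.exists_diagonal_sub_smul_eq_diagonal_add {P : Matrix n n ℝ} (hP : P.PosSemidef)
    {w : n → ℝ} (hw : ∀ j, 0 < w j) (hPw : ∀ j, P j j ≤ w j) {κ : ℝ} (hκ : 1 ≤ κ) :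
    ∃ (δ : n → ℝ) (H : Matrix n n ℝ), (∀ j, 0 < δ j) ∧ H.PosSemidef ∧
      (∀ j, w j ≤ κ * δ j) ∧ (∀ j, H j j ≤ (κ * δ j) ^ 2) ∧
      diagonal w - (1 - 1 / κ) • (diagonal (fun j => P j j) - P ⊙ P) = diagonal δ + H := by
  have hα : 0 ≤ 1 - 1 / κ := sub_nonneg.2 (div_le_one_of_le₀ hκ (by linarith))
  have hα1 : 1 - 1 / κ ≤ 1 := sub_le_self _ (by positivity)
  have hwδ : ∀ j, w j ≤ κ * (w j - (1 - 1 / κ) * P j j) := fun j =>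
    le_mul_sub_one_sub_one_div_mul (hPw j) hκ
  refine ⟨fun j => w j - (1 - 1 / κ) * P j j, (1 - 1 / κ) • (P ⊙ P),
    fun j => pos_of_mul_pos_right ((hw j).trans_le (hwδ j)) (by linarith),
    (hP.hadamard hP).smul hα, hwδ, fun j => ?_, diagonal_sub_smul_diagonal_sub_hadamard _ _ _⟩
  have hPjj : P j j * P j j ≤ (κ * (w j - (1 - 1 / κ) * P j j)) ^ 2 := by
    rw [← sq]
    exact pow_le_pow_left₀ hP.diag_nonneg ((hPw j).trans (hwδ j)) 2
  simp only [smul_apply, hadamard_apply, smul_eq_mul]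
  exact (mul_le_of_le_one_left (mul_self_nonneg _) hα1).trans hPjj

variable [Fintype n]

lemma mulVec_col_nonsing_inv {R : Type*} [CommRing R] {F : Matrix n n R} (hF : IsUnit F)
    (i : n) : F *ᵥ F⁻¹.col i = Pi.single i 1 := by
  rw [← mulVec_single_one, mulVec_mulVec, mul_nonsing_inv _ ((isUnit_iff_isUnit_det F).mp hF),
    one_mulVec]

section DiagonalAddPosSemidef

variable {δ : n → ℝ} {H : Matrix n n ℝ}

lemma sum_mul_inv_diagonal_add_sq_le (hδ : ∀ j, 0 < δ j) (hH : H.PosSemidef) (i : n) :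
    ∑ j, δ j * (diagonal δ + H)⁻¹ j i ^ 2 ≤ (diagonal δ + H)⁻¹ i i := by
  set F := diagonal δ + H
  set u := F⁻¹.col i
  have hF : F.PosDef := (PosDef.diagonal hδ).add_posSemidef hH
  have hFu : u ⬝ᵥ F *ᵥ u = u ⬝ᵥ diagonal δ *ᵥ u + u ⬝ᵥ H *ᵥ u := by
    rw [add_mulVec, dotProduct_add]
  rw [mulVec_col_nonsing_inv hF.isUnit, dotProduct_single, mul_one] at hFu
  have hdiag : u ⬝ᵥ diagonal δ *ᵥ u = ∑ j, δ j * u j ^ 2 := by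
    simp only [dotProduct, mulVec_diagonal]
    congr! 1 with j
    ring
  have hHu := hH.dotProduct_mulVec_nonneg u
  rw [star_trivial] at hHu
  simp only [u, col_apply] at hdiag hFu
  linarith

lemma inv_diagonal_add_apply_self_nonneg (hδ : ∀ j, 0 < δ j) (hH : H.PosSemidef) (i : n) :
    0 ≤ (diagonal δ + H)⁻¹ i i :=
  (Finset.sum_nonneg fun j _ => mul_nonneg (hδ j).le (sq_nonneg _)).trans
    (sum_mul_inv_diagonal_add_sq_le hδ hH i)

lemma mul_inv_diagonal_add_apply_self_le_one (hδ : ∀ j, 0 < δ j) (hH : H.PosSemidef) (i : n) :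
    δ i * (diagonal δ + H)⁻¹ i i ≤ 1 := by
  have hsq : δ i * (diagonal δ + H)⁻¹ i i ^ 2 ≤ (diagonal δ + H)⁻¹ i i :=
    (Finset.single_le_sum (f := fun j => δ j * (diagonal δ + H)⁻¹ j i ^ 2)
      (fun j _ => mul_nonneg (hδ j).le (sq_nonneg _)) (Finset.mem_univ i)).trans
      (sum_mul_inv_diagonal_add_sq_le hδ hH i)
  nlinarith [inv_diagonal_add_apply_self_nonneg hδ hH i, hδ i]

lemma four_mul_sum_erase_mul_inv_diagonal_add_sq_le (hδ : ∀ j, 0 < δ j) (hH : H.PosSemidef)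
    (i : n) :
    4 * ∑ j ∈ Finset.univ.erase i, δ j * (diagonal δ + H)⁻¹ j i ^ 2 ≤ H i i / δ i ^ 2 := by
  set F := diagonal δ + H
  set u := F⁻¹.col i
  set z : n → ℝ := fun j => (H *ᵥ u) j / δ j
  have hF : F.PosDef := (PosDef.diagonal hδ).add_posSemidef hH
  have hrow : ∀ j, δ j * u j + (H *ᵥ u) j = (Pi.single i 1 : n → ℝ) j := by
    intro j
    rw [← mulVec_col_nonsing_inv hF.isUnit i, add_mulVec, Pi.add_apply, mulVec_diagonal]
  have hzu : z + u = Pi.single i (δ i)⁻¹ := by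
    ext j
    have := hrow j
    rcases eq_or_ne j i with rfl | hj
    · simp only [z, Pi.add_apply, Pi.single_eq_same] at this ⊢
      field_simp [(hδ j).ne']
      linarith
    · simp only [z, Pi.add_apply, Pi.single_eq_of_ne hj] at this ⊢
      field_simp [(hδ j).ne']
      linarith
  have hsum : ∑ j ∈ Finset.univ.erase i, δ j * F⁻¹ j i ^ 2 ≤ z ⬝ᵥ H *ᵥ u := by
    calc ∑ j ∈ Finset.univ.erase i, δ j * F⁻¹ j i ^ 2
        = ∑ j ∈ Finset.univ.erase i, (H *ᵥ u) j ^ 2 / δ j := by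
          refine Finset.sum_congr rfl fun j hj => ?_
          have := hrow j
          rw [Pi.single_eq_of_ne (Finset.ne_of_mem_erase hj)] at this
          rw [show (H *ᵥ u) j = -(δ j * u j) by linarith]
          field_simp [(hδ j).ne']
          simp [u]
      _ ≤ ∑ j, (H *ᵥ u) j ^ 2 / δ j :=
          Finset.sum_le_sum_of_subset_of_nonneg (Finset.erase_subset _ _)
            fun j _ _ => div_nonneg (sq_nonneg _) (hδ j).le
      _ = z ⬝ᵥ H *ᵥ u := by
          simp only [dotProduct, z]
          congr! 1 with j
          ring
  have hpolar := hH.four_mul_dotProduct_mulVec_le z u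
  rw [hzu] at hpolar
  simp only [mulVec_single, MulOpposite.op_inv, dotProduct_smul, single_dotProduct, col_apply,
    MulOpposite.smul_eq_mul_unop, MulOpposite.unop_inv, MulOpposite.unop_op] at hpolar
  calc 4 * ∑ j ∈ Finset.univ.erase i, δ j * F⁻¹ j i ^ 2 ≤ 4 * (z ⬝ᵥ H *ᵥ u) := by linarith
    _ ≤ (δ i)⁻¹ * H i i * (δ i)⁻¹ := hpolar
    _ = H i i / δ i ^ 2 := by ring

variable {w : n → ℝ} {κ : ℝ}

lemma inv_diagonal_add_mul_diagonal_apply_self_mem_Icc (hδ : ∀ j, 0 < δ j) (hH : H.PosSemidef)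
    (hw : ∀ j, 0 ≤ w j) (hwδ : ∀ j, w j ≤ κ * δ j) (hκ : 0 ≤ κ) (i : n) :
    ((diagonal δ + H)⁻¹ * diagonal w) i i ∈ Set.Icc 0 κ := by
  have hnonneg := inv_diagonal_add_apply_self_nonneg hδ hH i
  rw [mul_diagonal]
  refine ⟨mul_nonneg hnonneg (hw i), ?_⟩
  calc (diagonal δ + H)⁻¹ i i * w i ≤ (diagonal δ + H)⁻¹ i i * (κ * δ i) :=
        mul_le_mul_of_nonneg_left (hwδ i) hnonneg
    _ = κ * (δ i * (diagonal δ + H)⁻¹ i i) := by ring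
    _ ≤ κ := mul_le_of_le_one_right hκ (mul_inv_diagonal_add_apply_self_le_one hδ hH i)

lemma four_mul_sum_erase_inv_diagonal_add_mul_diagonal_sq_div_le (hδ : ∀ j, 0 < δ j)
    (hH : H.PosSemidef) (hw : ∀ j, 0 < w j) (hwδ : ∀ j, w j ≤ κ * δ j) (hκ : 0 ≤ κ) (i : n) :
    4 * ∑ j ∈ Finset.univ.erase i, ((diagonal δ + H)⁻¹ * diagonal w) i j ^ 2 / w j ≤
      κ * (H i i / δ i ^ 2) := by
  have hsymm : ∀ j, (diagonal δ + H)⁻¹ i j = (diagonal δ + H)⁻¹ j i := fun j =>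
    (((PosDef.diagonal hδ).add_posSemidef hH).inv.isHermitian.apply i j).symm
  have hterm : ∀ j, ((diagonal δ + H)⁻¹ * diagonal w) i j ^ 2 / w j ≤
      κ * (δ j * (diagonal δ + H)⁻¹ j i ^ 2) := fun j => by
    rw [mul_diagonal, hsymm, mul_pow, sq (w j), ← mul_assoc, mul_div_assoc, div_self (hw j).ne',
      mul_one]
    nlinarith [hwδ j, sq_nonneg ((diagonal δ + H)⁻¹ j i)]
  calc 4 * ∑ j ∈ Finset.univ.erase i, ((diagonal δ + H)⁻¹ * diagonal w) i j ^ 2 / w j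
      ≤ 4 * ∑ j ∈ Finset.univ.erase i, κ * (δ j * (diagonal δ + H)⁻¹ j i ^ 2) :=
        mul_le_mul_of_nonneg_left (Finset.sum_le_sum fun j _ => hterm j) zero_le_four
    _ = κ * (4 * ∑ j ∈ Finset.univ.erase i, δ j * (diagonal δ + H)⁻¹ j i ^ 2) := by
        rw [← Finset.mul_sum]
        ring
    _ ≤ κ * (H i i / δ i ^ 2) :=
        mul_le_mul_of_nonneg_left (four_mul_sum_erase_mul_inv_diagonal_add_sq_le hδ hH i) hκ

end DiagonalAddPosSemidef

end Matrix

namespace PolytopeWalks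

lemma johnProj_posSemidef {d m : ℕ} (A : Matrix (Fin m) (Fin d) ℝ) (b : Fin m → ℝ)
    (x : Fin d → ℝ) {w : Fin m → ℝ} (hw : ∀ i, 0 < w i) : (johnProj A b x w).PosSemidef := by
  have hV : ((Amat A b x)ᵀ * diagonal (fun i => w i ^ alphaJ d m) * Amat A b x).PosSemidef := by
    simpa only [conjTranspose_eq_transpose_of_trivial] using
      (PosSemidef.diagonal fun i => rpow_nonneg (hw i).le _).conjTranspose_mul_mul_same
        (Amat A b x)
  have := hV.inv.mul_mul_conjTranspose_same
    (diagonal (fun i => w i ^ (alphaJ d m / 2)) * Amat A b x)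
  simpa [johnProj, conjTranspose_mul, Matrix.mul_assoc] using this

lemma lamMat_eq_diagonal_sub_hadamard {d m : ℕ} (A : Matrix (Fin m) (Fin d) ℝ) (b : Fin m → ℝ)
    (x : Fin d → ℝ) (w : Fin m → ℝ) :
    lamMat A b x w = diagonal (fun i => johnProj A b x w i i) -
      johnProj A b x w ⊙ johnProj A b x w := by
  ext i j
  simp [lamMat, hadSq, sq]

lemma one_le_kappaJ {d m : ℕ} (hd : 0 < d) (hdm : d ≤ m) : 1 ≤ kappaJ d m := by
  have hm : 0 < m := hd.trans_le hdm
  rw [kappaJ, Real.le_logb_iff_rpow_le one_lt_two (by positivity), rpow_one,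
    le_div_iff₀ (by positivity)]
  exact_mod_cast Nat.mul_le_mul_left 2 hdm

lemma IsJohnWeight.johnProj_apply_self_le {d m : ℕ} {A : Matrix (Fin m) (Fin d) ℝ}
    {b : Fin m → ℝ} {x : Fin d → ℝ} {w : Fin m → ℝ} (hw : IsJohnWeight A b x w) (i : Fin m) :
    johnProj A b x w i i ≤ w i := by
  have hβ : 0 ≤ betaJ d m := by unfold betaJ; positivity
  linarith [hw.2 i]

theorem john_M_entrywise_bounds_general (d m : ℕ) (hd : 0 < d) (hdm : d ≤ m)
    (A : Matrix (Fin m) (Fin d) ℝ) (b : Fin m → ℝ)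
    (x : Fin d → ℝ)
    (w : Fin m → ℝ) (hw : IsJohnWeight A b x w) :
    (∀ i, ((Gmat w - alphaJ d m • lamMat A b x w)⁻¹ * Gmat w) i i ∈
      Set.Icc (0 : ℝ) (kappaJ d m)) ∧
    (∀ i, ∑ j ∈ Finset.univ.erase i,
        (((Gmat w - alphaJ d m • lamMat A b x w)⁻¹ * Gmat w) i j) ^ 2 / w j ≤
      kappaJ d m ^ 3) := by
  have hκ := one_le_kappaJ hd hdm
  have hκ0 : 0 ≤ kappaJ d m := zero_le_one.trans hκ
  obtain ⟨δ, H, hδ, hH, hwδ, hHδ, hF⟩ :=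
    (johnProj_posSemidef A b x hw.1).exists_diagonal_sub_smul_eq_diagonal_add hw.1
      hw.johnProj_apply_self_le hκ
  have hGΛ : Gmat w - alphaJ d m • lamMat A b x w = diagonal δ + H := by
    rw [lamMat_eq_diagonal_sub_hadamard]
    exact hF
  rw [hGΛ, Gmat]
  refine ⟨inv_diagonal_add_mul_diagonal_apply_self_mem_Icc hδ hH (fun j => (hw.1 j).le) hwδ hκ0,
    fun i => ?_⟩
  have h4 := four_mul_sum_erase_inv_diagonal_add_mul_diagonal_sq_div_le hδ hH hw.1 hwδ hκ0 i
  have hHii : H i i / δ i ^ 2 ≤ kappaJ d m ^ 2 := by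
    rw [div_le_iff₀ (pow_pos (hδ i) 2), ← mul_pow]
    exact hHδ i
  nlinarith [mul_le_mul_of_nonneg_left hHii hκ0]

/-- Entrywise bounds for `M = (G − αΛ)⁻¹ G`: the diagonal entries lie in `[0, κ]` and
the weighted off-diagonal row sums satisfy `Σ_{j≠i} M_{ij}²/w_j ≤ κ³`. -/
theorem john_M_entrywise_bounds (d m : ℕ) (hd : 0 < d) (hdm : d ≤ m)
    (A : Matrix (Fin m) (Fin d) ℝ) (b : Fin m → ℝ) (hrank : A.rank = d)
    (x : Fin d → ℝ) (hx : x ∈ interiorPoly A b)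
    (w : Fin m → ℝ) (hw : IsJohnWeight A b x w) :
    (∀ i, ((Gmat w - alphaJ d m • lamMat A b x w)⁻¹ * Gmat w) i i ∈
      Set.Icc (0 : ℝ) (kappaJ d m)) ∧
    (∀ i, ∑ j ∈ Finset.univ.erase i,
        (((Gmat w - alphaJ d m • lamMat A b x w)⁻¹ * Gmat w) i j) ^ 2 / w j ≤
      kappaJ d m ^ 3) :=
  john_M_entrywise_bounds_general d m hd hdm A b x w hw

end PolytopeWalks
end
end
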